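/- For all real numbers A > 0 and B > 0 with B not an integer, and n = ⌊B⌋, the ratio of Gamma values admits the double-integral representation Γ(A)/Γ(B) = (sin(πB)/π) · ∫₀^1 ∫₀^1 (1 − e_{n−1}(log u)/u) · (log(1/u))^{−B} · (log(1/v))^{A−1} du dv, where both integrals are over the interval (0, 1). -/

import Mathlib

/-!
With `u = e^{-t}` the inner integrand becomes `(e^{-t} - e_{n-1}(-t)) t^{-B}`, the Taylor
remainder of `e^{-t}` against `t^{-B}`, and `∫₀^∞ (e^{-t} - e_{n-1}(-t)) t^{-B} dt = Γ(1 - B)` for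
`n < B < n + 1` (Cauchy–Saalschütz). For `n = 0` this is Euler's integral; otherwise integrating
by parts against `t^{1-B}/(1 - B)` lowers both `n` and `B` by one, and the boundary terms vanish
because the remainder is `O(tⁿ)` at `0` and `O(t^{n-1})` at `∞`. The same substitution turns the
outer integral into `Γ(A)`, and the reflection formula `Γ(B) Γ(1 - B) = π / sin(πB)` concludes.
-/

open MeasureTheory Real Filter Set

/-- Truncated exponential polynomial `e_n(x) = ∑_{k=0}^{n} x^k / k!`.
Note that `e_{n-1}(x)` corresponds to `∑ k in Finset.range n, x^k / k!`. -/
noncomputable def truncExpPrev (n : ℕ) (x : ℝ) : ℝ :=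
  ∑ k ∈ Finset.range n, x ^ k / (k.factorial : ℝ)

open scoped Nat Topology

noncomputable def expNegRemainder (n : ℕ) (t : ℝ) : ℝ := exp (-t) - truncExpPrev n (-t)

lemma continuous_truncExpPrev (n : ℕ) : Continuous (truncExpPrev n) := by
  unfold truncExpPrev
  fun_prop

lemma continuous_expNegRemainder (n : ℕ) : Continuous (expNegRemainder n) := by
  have := continuous_truncExpPrev n
  unfold expNegRemainder
  fun_prop

lemma truncExpPrev_succ (n : ℕ) (x : ℝ) :
    truncExpPrev (n + 1) x = truncExpPrev n x + x ^ n / n ! :=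
  Finset.sum_range_succ _ _

lemma truncExpPrev_succ_zero (n : ℕ) : truncExpPrev (n + 1) 0 = 1 := by
  simp [truncExpPrev, Finset.sum_range_succ']

lemma hasDerivAt_truncExpPrev_succ (n : ℕ) (x : ℝ) :
    HasDerivAt (truncExpPrev (n + 1)) (truncExpPrev n x) x := by
  induction n with
  | zero =>
    have hone : truncExpPrev 1 = fun _ => 1 := funext fun y => by simp [truncExpPrev]
    simpa [hone, truncExpPrev] using hasDerivAt_const x (1 : ℝ)
  | succ n ih =>
    have hpow := (hasDerivAt_pow (n + 1) x).div_const ((n + 1)! : ℝ)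
    rw [funext (truncExpPrev_succ (n + 1))]
    refine (ih.fun_add hpow).congr_deriv ?_
    rw [truncExpPrev_succ, add_tsub_cancel_right, Nat.factorial_succ]
    push_cast
    field_simp

lemma hasDerivAt_expNegRemainder_succ (n : ℕ) (t : ℝ) :
    HasDerivAt (expNegRemainder (n + 1)) (-expNegRemainder n t) t := by
  have hexp : HasDerivAt (fun t => exp (-t)) (-exp (-t)) t := by
    simpa using (hasDerivAt_neg t).exp
  have htrunc := (hasDerivAt_truncExpPrev_succ n (-t)).comp t (hasDerivAt_neg t)
  refine (hexp.sub htrunc).congr_deriv ?_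
  rw [expNegRemainder]
  ring

lemma abs_expNegRemainder_le (n : ℕ) {t : ℝ} (ht : 0 ≤ t) :
    |expNegRemainder n t| ≤ t ^ n / n ! := by
  induction n generalizing t with
  | zero =>
    simpa [expNegRemainder, truncExpPrev, abs_of_pos (exp_pos _)] using ht
  | succ n ih =>
    have hftc : ∫ s in (0 : ℝ)..t, -expNegRemainder n s = expNegRemainder (n + 1) t := by
      rw [intervalIntegral.integral_eq_sub_of_hasDerivAt
        (fun s _ => hasDerivAt_expNegRemainder_succ n s)
        ((continuous_expNegRemainder n).neg.intervalIntegrable 0 t)]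
      simp [expNegRemainder, truncExpPrev_succ_zero]
    rw [← hftc]
    calc |∫ s in (0 : ℝ)..t, -expNegRemainder n s|
        ≤ ∫ s in (0 : ℝ)..t, |-expNegRemainder n s| :=
          intervalIntegral.abs_integral_le_integral_abs ht
      _ ≤ ∫ s in (0 : ℝ)..t, s ^ n / n ! := by
          refine intervalIntegral.integral_mono_on ht
            ((continuous_expNegRemainder n).neg.abs.intervalIntegrable 0 t)
            ((by fun_prop : Continuous fun s : ℝ => s ^ n / n !).intervalIntegrable 0 t)
            fun s hs => ?_
          rw [abs_neg]
          exact ih hs.1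
      _ = t ^ (n + 1) / (n + 1)! := by
          rw [intervalIntegral.integral_div, integral_pow, Nat.factorial_succ]
          push_cast
          field_simp
          simp

lemma abs_truncExpPrev_neg_le (n : ℕ) {t : ℝ} (ht : 1 ≤ t) :
    |truncExpPrev n (-t)| ≤ n * t ^ ((n : ℝ) - 1) := by
  have ht0 : 0 < t := one_pos.trans_le ht
  calc |truncExpPrev n (-t)| ≤ ∑ k ∈ Finset.range n, |(-t) ^ k / k !| :=
        Finset.abs_sum_le_sum_abs _ _
    _ ≤ ∑ _k ∈ Finset.range n, t ^ ((n : ℝ) - 1) := by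
        refine Finset.sum_le_sum fun k hk => ?_
        have hkn : (k : ℝ) ≤ n - 1 := le_sub_iff_add_le.2 (mod_cast Finset.mem_range.mp hk)
        rw [abs_div, abs_pow, abs_neg, abs_of_pos ht0, Nat.abs_cast, ← rpow_natCast]
        exact (div_le_self (by positivity) (Nat.one_le_cast.2 k.factorial_pos)).trans
          (rpow_le_rpow_of_exponent_le ht hkn)
    _ = n * t ^ ((n : ℝ) - 1) := by simp

lemma abs_expNegRemainder_le_of_one_le (n : ℕ) {t : ℝ} (ht : 1 ≤ t) :
    |expNegRemainder n t| ≤ (n + 1) * t ^ ((n : ℝ) - 1) := by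
  have ht0 : 0 < t := one_pos.trans_le ht
  have hexp : exp (-t) ≤ t ^ ((n : ℝ) - 1) :=
    calc exp (-t) ≤ t⁻¹ := by
          rw [exp_neg]
          exact inv_anti₀ ht0 (by linarith [add_one_le_exp t])
      _ = t ^ (-1 : ℝ) := (rpow_neg_one t).symm
      _ ≤ t ^ ((n : ℝ) - 1) :=
          rpow_le_rpow_of_exponent_le ht (by linarith [n.cast_nonneg (α := ℝ)])
  calc |expNegRemainder n t| ≤ |exp (-t)| + |truncExpPrev n (-t)| := abs_sub _ _
    _ ≤ t ^ ((n : ℝ) - 1) + n * t ^ ((n : ℝ) - 1) := by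
        rw [abs_of_pos (exp_pos _)]
        exact add_le_add hexp (abs_truncExpPrev_neg_le n ht)
    _ = (n + 1) * t ^ ((n : ℝ) - 1) := by ring

lemma abs_expNegRemainder_mul_rpow_le (n : ℕ) (s : ℝ) {t : ℝ} (ht : 0 < t) :
    |expNegRemainder n t * t ^ s| ≤ t ^ (n + s) / n ! := by
  rw [abs_mul, abs_of_pos (rpow_pos_of_pos ht s), rpow_add ht, rpow_natCast, mul_div_right_comm]
  gcongr
  exact abs_expNegRemainder_le n ht.le

lemma abs_expNegRemainder_mul_rpow_le_of_one_le (n : ℕ) (s : ℝ) {t : ℝ} (ht : 1 ≤ t) :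
    |expNegRemainder n t * t ^ s| ≤ (n + 1) * t ^ (n - 1 + s) := by
  have ht0 : 0 < t := one_pos.trans_le ht
  rw [abs_mul, abs_of_pos (rpow_pos_of_pos ht0 s), rpow_add ht0, ← mul_assoc]
  gcongr
  exact abs_expNegRemainder_le_of_one_le n ht

lemma tendsto_expNegRemainder_mul_rpow_nhdsGT_zero (n : ℕ) {s : ℝ} (hs : 0 < n + s) :
    Tendsto (fun t => expNegRemainder n t * t ^ s) (𝓝[>] 0) (𝓝 0) := by
  have hpow : Tendsto (fun t : ℝ => t ^ (n + s) / n !) (𝓝[>] 0) (𝓝 0) := by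
    have := ((continuousAt_rpow_const 0 (n + s) (Or.inr hs.le)).tendsto.div_const
      (n ! : ℝ)).mono_left (nhdsWithin_le_nhds (s := Ioi 0))
    rwa [zero_rpow hs.ne', zero_div] at this
  refine squeeze_zero_norm' ?_ hpow
  filter_upwards [self_mem_nhdsWithin] with t ht
  exact abs_expNegRemainder_mul_rpow_le n s ht

lemma tendsto_expNegRemainder_mul_rpow_atTop (n : ℕ) {s : ℝ} (hs : n - 1 + s < 0) :
    Tendsto (fun t => expNegRemainder n t * t ^ s) atTop (𝓝 0) := by
  have hpow : Tendsto (fun t : ℝ => (n + 1) * t ^ (n - 1 + s)) atTop (𝓝 0) := by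
    simpa using (tendsto_rpow_neg_atTop (neg_pos.2 hs)).const_mul ((n : ℝ) + 1)
  refine squeeze_zero_norm' ?_ hpow
  filter_upwards [eventually_ge_atTop 1] with t ht
  exact abs_expNegRemainder_mul_rpow_le_of_one_le n s ht

lemma integrableOn_expNegRemainder_mul_rpow (n : ℕ) {s : ℝ} (h0 : -1 < n + s)
    (hinf : n + s < 0) :
    IntegrableOn (fun t => expNegRemainder n t * t ^ s) (Ioi 0) := by
  have hcont : ContinuousOn (fun t => expNegRemainder n t * t ^ s) (Ioi 0) :=
    (continuous_expNegRemainder n).continuousOn.mul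
      (continuousOn_id.rpow_const fun t ht => Or.inl (ne_of_gt ht))
  rw [← Ioc_union_Ioi_eq_Ioi zero_le_one]
  refine IntegrableOn.union ?_ ?_
  · refine Integrable.mono'
      ((intervalIntegral.intervalIntegrable_rpow' h0).1.div_const (n ! : ℝ))
      ((hcont.mono Ioc_subset_Ioi_self).aestronglyMeasurable measurableSet_Ioc) ?_
    filter_upwards [ae_restrict_mem measurableSet_Ioc] with t ht
    exact abs_expNegRemainder_mul_rpow_le n s ht.1
  · refine Integrable.mono'
      ((integrableOn_Ioi_rpow_of_lt (a := (n : ℝ) - 1 + s) (by linarith) one_pos).const_mul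
        ((n : ℝ) + 1))
      ((hcont.mono (Ioi_subset_Ioi zero_le_one)).aestronglyMeasurable measurableSet_Ioi) ?_
    filter_upwards [ae_restrict_mem measurableSet_Ioi] with t ht
    exact abs_expNegRemainder_mul_rpow_le_of_one_le n s (le_of_lt ht)

lemma integral_expNegRemainder_succ_mul_rpow_neg (n : ℕ) {B : ℝ} (h1 : n + 1 < B)
    (h2 : B < n + 2) :
    ∫ t in Ioi 0, expNegRemainder (n + 1) t * t ^ (-B) =
      (∫ t in Ioi 0, expNegRemainder n t * t ^ (1 - B)) / (1 - B) := by
  have hB : 1 - B ≠ 0 := by linarith [n.cast_nonneg (α := ℝ)]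
  have hv : ∀ t ∈ Ioi (0 : ℝ), HasDerivAt (fun t => t ^ (1 - B) / (1 - B)) (t ^ (-B)) t := by
    intro t ht
    refine ((hasDerivAt_rpow_const (Or.inl (ne_of_gt ht))).div_const (1 - B)).congr_deriv ?_
    rw [sub_sub_cancel_left]
    field_simp
  have hboundary : (expNegRemainder (n + 1) * fun t => t ^ (1 - B) / (1 - B)) =
      fun t => (expNegRemainder (n + 1) t * t ^ (1 - B)) / (1 - B) := by
    ext t
    simp only [Pi.mul_apply, mul_div_assoc]
  have key := integral_Ioi_mul_deriv_eq_deriv_mul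
    (fun t _ => hasDerivAt_expNegRemainder_succ n t) hv
    (integrableOn_expNegRemainder_mul_rpow (n + 1) (s := -B) (by push_cast; linarith)
      (by push_cast; linarith))
    (((integrableOn_expNegRemainder_mul_rpow n (s := 1 - B) (by linarith) (by linarith)).div_const
      (1 - B)).neg.congr (ae_of_all _ fun t => by simp only [Pi.neg_apply, Pi.mul_apply]; ring))
    (hboundary ▸ (tendsto_expNegRemainder_mul_rpow_nhdsGT_zero (n + 1) (s := 1 - B)
      (by push_cast; linarith)).div_const (1 - B))
    (hboundary ▸ (tendsto_expNegRemainder_mul_rpow_atTop (n + 1) (s := 1 - B)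
      (by push_cast; linarith)).div_const (1 - B))
  rw [key, zero_div, sub_zero, zero_sub, ← integral_neg, ← integral_div]
  refine setIntegral_congr_fun measurableSet_Ioi fun t _ => ?_
  ring

lemma integral_expNegRemainder_mul_rpow_neg (n : ℕ) {B : ℝ} (h1 : n < B) (h2 : B < n + 1) :
    ∫ t in Ioi 0, expNegRemainder n t * t ^ (-B) = Gamma (1 - B) := by
  induction n generalizing B with
  | zero =>
    rw [Gamma_eq_integral (by simpa using h2)]
    refine setIntegral_congr_fun measurableSet_Ioi fun t _ => ?_
    simp [expNegRemainder, truncExpPrev, mul_comm]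
  | succ n ih =>
    push_cast at h1 h2
    have hB : 1 - B ≠ 0 := by linarith [n.cast_nonneg (α := ℝ)]
    have hIH := ih (B := B - 1) (by linarith) (by linarith)
    rw [neg_sub, show 1 - (B - 1) = 1 - B + 1 by ring, Gamma_add_one hB] at hIH
    rw [integral_expNegRemainder_succ_mul_rpow_neg n h1 (by linarith), hIH,
      mul_div_cancel_left₀ _ hB]

lemma image_exp_neg_Ioi_zero : (fun t => exp (-t)) '' Ioi 0 = Ioo 0 1 := by
  ext u
  constructor
  · rintro ⟨t, ht, rfl⟩
    exact ⟨exp_pos _, exp_lt_one_iff.2 (neg_lt_zero.2 ht)⟩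
  · intro hu
    exact ⟨-log u, neg_pos.2 (log_neg hu.1 hu.2), by simp [exp_log hu.1]⟩

lemma integral_Ioo_zero_one_eq_integral_Ioi_exp_neg {E : Type*} [NormedAddCommGroup E]
    [NormedSpace ℝ E] (g : ℝ → E) :
    ∫ u in Ioo 0 1, g u = ∫ t in Ioi 0, exp (-t) • g (exp (-t)) := by
  have hderiv : ∀ t ∈ Ioi (0 : ℝ),
      HasDerivWithinAt (fun t => exp (-t)) (-exp (-t)) (Ioi 0) t :=
    fun t _ => by simpa using ((hasDerivAt_neg t).exp).hasDerivWithinAt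
  have hinj : InjOn (fun t => exp (-t)) (Ioi 0) := fun a _ b _ h => neg_inj.1 (exp_injective h)
  rw [← image_exp_neg_Ioi_zero, integral_image_eq_integral_abs_deriv_smul measurableSet_Ioi
    hderiv hinj g]
  simp only [abs_neg, abs_of_pos (exp_pos _)]

lemma integral_log_one_div_rpow {A : ℝ} (hA : 0 < A) :
    ∫ v in Ioo 0 1, log (1 / v) ^ (A - 1) = Gamma A := by
  rw [integral_Ioo_zero_one_eq_integral_Ioi_exp_neg, Gamma_eq_integral hA]
  refine setIntegral_congr_fun measurableSet_Ioi fun t _ => ?_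
  simp [← exp_neg, mul_comm]

lemma integral_one_sub_truncExpPrev_log_div_mul_rpow {n : ℕ} {B : ℝ} (h1 : n < B)
    (h2 : B < n + 1) :
    ∫ u in Ioo 0 1, (1 - truncExpPrev n (log u) / u) * log (1 / u) ^ (-B) = Gamma (1 - B) := by
  rw [integral_Ioo_zero_one_eq_integral_Ioi_exp_neg,
    ← integral_expNegRemainder_mul_rpow_neg n h1 h2]
  refine setIntegral_congr_fun measurableSet_Ioi fun t _ => ?_
  simp only [smul_eq_mul, one_div, ← exp_neg, neg_neg, log_exp, expNegRemainder]
  field_simp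

/-- Ratio of Gamma values as a double integral: for `A > 0`, non-integer `B > 0`, `n = ⌊B⌋`,
`Γ(A)/Γ(B) = (sin(πB)/π) ∫₀^1 ∫₀^1 (1 - e_{n-1}(log u)/u) (log(1/u))^{-B} (log(1/v))^{A-1} du dv`. -/
theorem Gamma_ratio_double_integral_rep (A B : ℝ) (hA : 0 < A) (hB : 0 < B)
    (hBnint : ∀ m : ℤ, B ≠ (m : ℝ)) :
    Real.Gamma A / Real.Gamma B = (Real.sin (π * B) / π) *
      ∫ v in Set.Ioo (0 : ℝ) 1, ∫ u in Set.Ioo (0 : ℝ) 1,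
        (1 - truncExpPrev ⌊B⌋₊ (Real.log u) / u) * Real.log (1 / u) ^ (-B) *
          Real.log (1 / v) ^ (A - 1) := by
  have hfloor : (⌊B⌋₊ : ℝ) < B :=
    (Nat.floor_le hB.le).lt_of_ne fun h => hBnint ⌊B⌋₊ (by exact_mod_cast h.symm)
  have hsin : sin (π * B) ≠ 0 :=
    sin_ne_zero_iff.2 fun m hm => hBnint m (mul_right_cancel₀ pi_ne_zero (by linarith))
  simp_rw [integral_mul_const, integral_one_sub_truncExpPrev_log_div_mul_rpow hfloor
    (Nat.lt_floor_add_one B), integral_const_mul, integral_log_one_div_rpow hA]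
  have hreflect := Gamma_mul_Gamma_one_sub B
  have hΓ := (Gamma_pos_of_pos hB).ne'
  field_simp
  rw [mul_right_comm, hreflect, div_mul_cancel₀ π hsin]
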